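/- arXiv:1610.07594 — 12 statements merged into one kernel-verified Lean document; each statement's English description precedes it below -/
import Mathlib

section
/- (Cantor intersection theorem for distance spaces) Let (X,d) be a complete distance space and (A_n)_{n∈ℕ} a sequence of subsets of X such that: each A_n is nonempty; each A_n is closed (its complement is d-open); the sets are nested, A_{n+1} ⊆ A_n for all n; and the diameters tend to zero, i.e. for every ε > 0 there exists N such that for all n ≥ N and all x, y ∈ A_n, d(x,y) < ε. Then the intersection ⋂_{n∈ℕ} A_n contains exactly one point. -/
/-- A distance function: non-negative, nondegenerate, symmetric. -/
def IsDistance {X : Type*} (d : X → X → ℝ) : Prop :=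
  (∀ x y, 0 ≤ d x y) ∧ (∀ x y, d x y = 0 ↔ x = y) ∧ (∀ x y, d x y = d y x)

/-- The open ball centered at `x` with radius `r` in a distance space. -/
def dball {X : Type*} (d : X → X → ℝ) (x : X) (r : ℝ) : Set X := {y | d x y < r}

/-- A set is `d`-open if every point has an open ball around it inside the set. -/
def IsDOpen {X : Type*} (d : X → X → ℝ) (U : Set X) : Prop :=
  ∀ x ∈ U, ∃ r : ℝ, 0 < r ∧ dball d x r ⊆ U

/-- Convergence of a sequence in a distance space. -/
def DConvergesTo {X : Type*} (d : X → X → ℝ) (x : ℕ → X) (L : X) : Prop :=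
  ∀ ε : ℝ, 0 < ε → ∃ N : ℕ, ∀ n ≥ N, d (x n) L < ε

/-- A sequence is Cauchy in a distance space. -/
def DCauchy {X : Type*} (d : X → X → ℝ) (x : ℕ → X) : Prop :=
  ∀ ε : ℝ, 0 < ε → ∃ N : ℕ, ∀ m ≥ N, ∀ n ≥ N, d (x m) (x n) < ε

/-- Cantor intersection theorem in a complete distance space: a nested sequence of
nonempty closed sets whose diameters tend to zero has exactly one common point. -/
theorem cantor_intersection {X : Type*} (d : X → X → ℝ) (hd : IsDistance d)
    (hcomplete : ∀ x : ℕ → X, DCauchy d x → ∃ L, DConvergesTo d x L)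
    (A : ℕ → Set X)
    (hne : ∀ n, (A n).Nonempty)
    (hclosed : ∀ n, IsDOpen d (A n)ᶜ)
    (hnested : ∀ n, A (n + 1) ⊆ A n)
    (hdiam : ∀ ε : ℝ, 0 < ε → ∃ N : ℕ, ∀ n ≥ N, ∀ x ∈ A n, ∀ y ∈ A n, d x y < ε) :
    ∃! z, z ∈ ⋂ n, A n := by
  obtain ⟨hpos, hzero, hsymm⟩ := hd
  choose x hx using hne
  have hmono : ∀ {m n : ℕ}, m ≤ n → A n ⊆ A m := by
    intro m n hmn
    induction hmn with
    | refl => exact fun _ h => h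
    | step _ ih => exact fun a ha => ih (hnested _ ha)
  have hcauchy : DCauchy d x := by
    intro ε hε
    obtain ⟨N, hN⟩ := hdiam ε hε
    exact ⟨N, fun m hm n hn =>
      hN N le_rfl (x m) (hmono hm (hx m)) (x n) (hmono hn (hx n))⟩
  obtain ⟨L, hL⟩ := hcomplete x hcauchy
  have hLmem : ∀ n, L ∈ A n := by
    intro n
    by_contra hLn
    obtain ⟨r, hr, hball⟩ := hclosed n L hLn
    obtain ⟨N, hN⟩ := hL r hr
    have hmem : x (max n N) ∈ A n := hmono (le_max_left _ _) (hx _)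
    have : x (max n N) ∈ dball d L r := by
      simp only [dball, Set.mem_setOf_eq, hsymm L]
      exact hN _ (le_max_right _ _)
    exact hball this hmem
  refine ⟨L, Set.mem_iInter.mpr hLmem, fun z hz => ?_⟩
  have hz' := Set.mem_iInter.mp hz
  have : d z L = 0 := by
    by_contra h
    have hpos' : 0 < d z L := lt_of_le_of_ne (hpos z L) (Ne.symm h)
    obtain ⟨N, hN⟩ := hdiam (d z L) hpos'
    exact absurd (hN N le_rfl z (hz' N) L (hLmem N)) (lt_irrefl _)
  exact (hzero z L).mp this
end

section
/- Let (X,d) be a distance space, p ≥ 1 a real number and σ > 0 with 2σ = 2^(1/p), and suppose d satisfies the power triangle inequality with parameters (p,σ). Then the reverse triangle inequality holds: |d(x,z) − d(z,y)| ≤ d(x,y) for all x, y, z ∈ X. -/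
/-- `d` satisfies the power triangle inequality with parameters `(p, σ)`,
where `^` denotes real (rpow) exponentiation. -/
def PowerTriangleIneq {X : Type*} (d : X → X → ℝ) (p σ : ℝ) : Prop :=
  ∀ x y z : X,
    d x y ≤ 2 * σ * ((1 / 2) * d x z ^ p + (1 / 2) * d z y ^ p) ^ (1 / p)

lemma real_rpow_add_rpow_le_add {p a b : ℝ} (ha : 0 ≤ a) (hb : 0 ≤ b) (hp : 1 ≤ p) :
    (a ^ p + b ^ p) ^ (1 / p) ≤ a + b := by
  lift a to NNReal using ha
  lift b to NNReal using hb
  have := NNReal.rpow_add_rpow_le_add a b hp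
  exact_mod_cast this

/-- If `2σ = 2^(1/p)` with `p ≥ 1`, the reverse triangle inequality holds. -/
theorem reverse_triangle_inequality {X : Type*} (d : X → X → ℝ) (hd : IsDistance d)
    (p σ : ℝ) (hp : 1 ≤ p) (hσ : 0 < σ) (hσp : 2 * σ = 2 ^ (1 / p))
    (hpt : PowerTriangleIneq d p σ) (x y z : X) :
    |d x z - d z y| ≤ d x y := by
  obtain ⟨hnn, _, hsymm⟩ := hd
  have hp0 : p ≠ 0 := by linarith
  have tri : ∀ a b c : X, d a b ≤ d a c + d c b := by
    intro a b c
    have h := hpt a b c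
    have hs : (0:ℝ) ≤ (1 / 2) * d a c ^ p + (1 / 2) * d c b ^ p := by
      have := Real.rpow_nonneg (hnn a c) p
      have := Real.rpow_nonneg (hnn c b) p
      positivity
    rw [hσp, ← Real.mul_rpow (by norm_num) hs] at h
    have : (2:ℝ) * ((1 / 2) * d a c ^ p + (1 / 2) * d c b ^ p)
        = d a c ^ p + d c b ^ p := by ring
    rw [this] at h
    exact h.trans (real_rpow_add_rpow_le_add (hnn a c) (hnn c b) hp)
  rw [abs_sub_le_iff]
  constructor
  · have h := tri x z y
    rw [hsymm z y] at *
    linarith [tri x z y, hsymm y z]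
  · have h := tri z y x
    have := hsymm z x
    have := hsymm x y
    linarith
end

section
/- Let (X,d) be a distance space, p ≠ 0 a real number and σ > 0 with 2σ ≤ 2^(1/p), and suppose d satisfies the power triangle inequality with parameters (p,σ). Then every open ball B(x,r) (x ∈ X, r > 0) is d-open: for every q ∈ B(x,r) there exists r_q > 0 with B(q,r_q) ⊆ B(x,r). -/
/-- If `2σ ≤ 2^(1/p)`, every open ball in a power distance space is `d`-open. -/
theorem openBall_isDOpen {X : Type*} (d : X → X → ℝ) (hd : IsDistance d)
    (p σ : ℝ) (hp : p ≠ 0) (hσ : 0 < σ) (hσp : 2 * σ ≤ 2 ^ (1 / p))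
    (hpt : PowerTriangleIneq d p σ) :
    ∀ (x : X) (r : ℝ), 0 < r → IsDOpen d (dball d x r) := by
  obtain ⟨hnn, hzero, hsym⟩ := hd
  intro x r hr q hq
  simp only [dball, Set.mem_setOf_eq] at hq
  have han : (0:ℝ) ≤ d x q := hnn x q
  -- general bound
  have key : ∀ y : X, d x y ≤ (d x q ^ p + d q y ^ p) ^ (1 / p) := by
    intro y
    have h1 := hpt x y q
    have hin : (0:ℝ) ≤ (1 / 2) * d x q ^ p + (1 / 2) * d q y ^ p := by
      have := Real.rpow_nonneg (hnn x q) p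
      have := Real.rpow_nonneg (hnn q y) p
      linarith
    have h2 : (2 * σ) * ((1 / 2) * d x q ^ p + (1 / 2) * d q y ^ p) ^ (1 / p)
        ≤ 2 ^ (1 / p) * ((1 / 2) * d x q ^ p + (1 / 2) * d q y ^ p) ^ (1 / p) :=
      mul_le_mul_of_nonneg_right hσp (Real.rpow_nonneg hin _)
    have h3 : 2 ^ (1 / p) * ((1 / 2) * d x q ^ p + (1 / 2) * d q y ^ p) ^ (1 / p)
        = (d x q ^ p + d q y ^ p) ^ (1 / p) := by
      rw [← Real.mul_rpow (by norm_num) hin]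
      ring_nf
    linarith
  rcases lt_or_gt_of_ne hp with hneg | hpos
  · -- p < 0
    refine ⟨r / 2, by positivity, ?_⟩
    intro y hy
    simp only [dball, Set.mem_setOf_eq] at hy ⊢
    by_cases hyq : y = q
    · subst hyq; exact hq
    · have hc0 : 0 < d q y :=
        lt_of_le_of_ne (hnn q y) (fun h => hyq ((hzero q y).mp h.symm).symm)
      have hcp : r ^ p < d q y ^ p := by
        have h1 : d q y ^ p > (r / 2) ^ p :=
          Real.rpow_lt_rpow_of_neg hc0 hy hneg
        have h2 : (r / 2) ^ p > r ^ p :=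
          Real.rpow_lt_rpow_of_neg (by positivity) (by linarith) hneg
        linarith
      have hsum : r ^ p < d x q ^ p + d q y ^ p := by
        have := Real.rpow_nonneg han p
        linarith
      have hrp : (0:ℝ) < r ^ p := Real.rpow_pos_of_pos hr p
      have hlt : (d x q ^ p + d q y ^ p) ^ (1 / p) < (r ^ p) ^ (1 / p) :=
        Real.rpow_lt_rpow_of_neg hrp hsum (by
          rw [one_div]; exact inv_neg''.2 hneg)
      have hrr : (r ^ p) ^ (1 / p) = r := by
        rw [one_div, Real.rpow_rpow_inv (le_of_lt hr) hp]
      calc d x y ≤ (d x q ^ p + d q y ^ p) ^ (1 / p) := key y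
        _ < r := by rw [hrr] at hlt; exact hlt
  · -- p > 0
    have hap : d x q ^ p < r ^ p := Real.rpow_lt_rpow han hq hpos
    refine ⟨(r ^ p - d x q ^ p) ^ (1 / p), Real.rpow_pos_of_pos (by linarith) _, ?_⟩
    intro y hy
    simp only [dball, Set.mem_setOf_eq] at hy ⊢
    have hcp : d q y ^ p < r ^ p - d x q ^ p := by
      have h1 : d q y ^ p < ((r ^ p - d x q ^ p) ^ (1 / p)) ^ p :=
        Real.rpow_lt_rpow (hnn q y) hy hpos
      rwa [one_div, Real.rpow_inv_rpow (by linarith) hp] at h1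
    have hsum : d x q ^ p + d q y ^ p < r ^ p := by linarith
    have hlt : (d x q ^ p + d q y ^ p) ^ (1 / p) < (r ^ p) ^ (1 / p) := by
      refine Real.rpow_lt_rpow ?_ hsum (by positivity)
      have := Real.rpow_nonneg han p
      have := Real.rpow_nonneg (hnn q y) p
      linarith
    have hrr : (r ^ p) ^ (1 / p) = r := by
      rw [one_div, Real.rpow_rpow_inv (le_of_lt hr) hp]
    calc d x y ≤ (d x q ^ p + d q y ^ p) ^ (1 / p) := key y
      _ < r := by rw [hrr] at hlt; exact hlt
end

section
/- Let (X,d) be a distance space, p ≠ 0 a real number and σ > 0 with 2σ ≤ 2^(1/p), and suppose d satisfies the power triangle inequality with parameters (p,σ). Then the family of all open balls {B(x,r) : x ∈ X, r > 0} is a topological basis for the induced topology on X (the topology whose open sets are the d-open sets). -/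
/-- The topology induced by a distance space: the open sets are the `d`-open sets. -/
def distTopology {X : Type*} (d : X → X → ℝ) : TopologicalSpace X where
  IsOpen := IsDOpen d
  isOpen_univ := fun _ _ => ⟨1, one_pos, fun _ _ => trivial⟩
  isOpen_inter := fun U V hU hV x hx => by
    obtain ⟨r1, hr1, h1⟩ := hU x hx.1
    obtain ⟨r2, hr2, h2⟩ := hV x hx.2
    refine ⟨min r1 r2, lt_min hr1 hr2, fun y hy => ⟨h1 ?_, h2 ?_⟩⟩ <;>
        simp only [dball, Set.mem_setOf_eq] at hy ⊢
    · exact lt_of_lt_of_le hy (min_le_left _ _)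
    · exact lt_of_lt_of_le hy (min_le_right _ _)
  isOpen_sUnion := fun S hS x hx => by
    obtain ⟨U, hU, hxU⟩ := hx
    obtain ⟨r, hr, h⟩ := hS U hU x hxU
    exact ⟨r, hr, fun y hy => ⟨U, hU, h hy⟩⟩

/-- If `2σ ≤ 2^(1/p)`, the open balls form a basis for the induced topology. -/
theorem openBalls_basis {X : Type*} (d : X → X → ℝ) (hd : IsDistance d)
    (p σ : ℝ) (hp : p ≠ 0) (hσ : 0 < σ) (hσp : 2 * σ ≤ 2 ^ (1 / p))
    (hpt : PowerTriangleIneq d p σ) :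
    @TopologicalSpace.IsTopologicalBasis X (distTopology d)
      {B : Set X | ∃ (x : X) (r : ℝ), 0 < r ∧ B = dball d x r} := by
  obtain ⟨hnn, hzero, hsymm⟩ := hd
  have hball : ∀ (x : X) (r : ℝ), IsDOpen d (dball d x r) := by
    intro x r y hy
    simp only [dball, Set.mem_setOf_eq] at hy
    have hxy0 : 0 ≤ d x y := hnn x y
    rcases lt_or_gt_of_ne hp with hpneg | hppos
    · -- p < 0
      refine ⟨r - d x y, by linarith, fun z hz => ?_⟩
      simp only [dball, Set.mem_setOf_eq] at hz ⊢
      by_cases hyz : d y z = 0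
      · have : y = z := (hzero y z).mp hyz
        rwa [← this]
      by_cases hxy : d x y = 0
      · have hxyeq : x = y := (hzero x y).mp hxy
        rw [hxyeq]
        rw [hxy] at hz
        linarith
      have hyz' : 0 < d y z := lt_of_le_of_ne (hnn y z) (Ne.symm hyz)
      have hxy' : 0 < d x y := lt_of_le_of_ne hxy0 (Ne.symm hxy)
      have h1 : d x z ≤ 2 * σ * ((1/2) * d x y ^ p + (1/2) * d y z ^ p) ^ (1/p) :=
        hpt x z y
      have hs : (1/2 : ℝ) * d y z ^ p < (1/2) * d x y ^ p + (1/2) * d y z ^ p := by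
        have : (0:ℝ) < d x y ^ p := Real.rpow_pos_of_pos hxy' p
        linarith
      have ht0 : (0:ℝ) < (1/2) * d y z ^ p := by
        have : (0:ℝ) < d y z ^ p := Real.rpow_pos_of_pos hyz' p
        linarith
      have hinv : 1/p < 0 := div_neg_of_pos_of_neg one_pos hpneg
      have h2 : ((1/2) * d x y ^ p + (1/2) * d y z ^ p) ^ (1/p) <
          ((1/2 : ℝ) * d y z ^ p) ^ (1/p) :=
        Real.rpow_lt_rpow_of_neg ht0 hs hinv
      have hkey : (d y z ^ p) ^ (1/p) = d y z := by
        rw [one_div, Real.rpow_rpow_inv hyz'.le hp]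
      have h3 : ((1/2 : ℝ) * d y z ^ p) ^ (1/p) = (2 ^ (1/p) : ℝ)⁻¹ * d y z := by
        rw [Real.mul_rpow (by norm_num) (Real.rpow_nonneg hyz'.le p), hkey]
        congr 1
        rw [show (1/2 : ℝ) = 2⁻¹ by norm_num, Real.inv_rpow (by norm_num)]
      have h2pos : (0:ℝ) < 2 ^ (1/p) := Real.rpow_pos_of_pos (by norm_num) _
      have h4 : d x z < 2 * σ * ((2 ^ (1/p) : ℝ)⁻¹ * d y z) := by
        calc d x z ≤ 2 * σ * ((1/2) * d x y ^ p + (1/2) * d y z ^ p) ^ (1/p) := h1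
          _ < 2 * σ * ((1/2 : ℝ) * d y z ^ p) ^ (1/p) :=
              mul_lt_mul_of_pos_left h2 (by linarith)
          _ = 2 * σ * ((2 ^ (1/p) : ℝ)⁻¹ * d y z) := by rw [h3]
      have h5 : 2 * σ * ((2 ^ (1/p) : ℝ)⁻¹ * d y z) ≤ d y z := by
        have h6 : 2 * σ * ((2 ^ (1/p) : ℝ)⁻¹ * d y z) ≤
            2 ^ (1/p) * ((2 ^ (1/p) : ℝ)⁻¹ * d y z) := by
          apply mul_le_mul_of_nonneg_right hσp
          positivity
        have h7 : (2 ^ (1/p) : ℝ) * ((2 ^ (1/p) : ℝ)⁻¹ * d y z) = d y z := by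
          rw [← mul_assoc, mul_inv_cancel₀ (ne_of_gt h2pos), one_mul]
        linarith
      linarith
    · -- p > 0
      have hrp : d x y ^ p < r ^ p :=
        Real.rpow_lt_rpow hxy0 hy hppos
      set ε : ℝ := (r ^ p - d x y ^ p) ^ (1/p) with hε
      have hεpos : 0 < ε := Real.rpow_pos_of_pos (by linarith) _
      refine ⟨ε, hεpos, fun z hz => ?_⟩
      simp only [dball, Set.mem_setOf_eq] at hz ⊢
      have hεp : ε ^ p = r ^ p - d x y ^ p := by
        rw [hε, one_div, Real.rpow_inv_rpow (by linarith) hp]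
      have hdyzp : d y z ^ p < r ^ p - d x y ^ p := by
        rw [← hεp]
        exact Real.rpow_lt_rpow (hnn y z) hz hppos
      have hs : (1/2 : ℝ) * d x y ^ p + (1/2) * d y z ^ p < (1/2) * r ^ p := by
        linarith
      have hsnn : (0:ℝ) ≤ (1/2) * d x y ^ p + (1/2) * d y z ^ p := by
        have h1 := Real.rpow_nonneg hxy0 p
        have h2 := Real.rpow_nonneg (hnn y z) p
        linarith
      have hinv : 0 < 1/p := by positivity
      calc d x z ≤ 2 * σ * ((1/2) * d x y ^ p + (1/2) * d y z ^ p) ^ (1/p) := hpt x z y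
        _ ≤ 2 ^ (1/p) * ((1/2) * d x y ^ p + (1/2) * d y z ^ p) ^ (1/p) := by
            apply mul_le_mul_of_nonneg_right hσp (Real.rpow_nonneg hsnn _)
        _ = (2 * ((1/2) * d x y ^ p + (1/2) * d y z ^ p)) ^ (1/p) := by
            rw [Real.mul_rpow (by norm_num) hsnn]
        _ < (r ^ p) ^ (1/p) := by
            apply Real.rpow_lt_rpow (by linarith) (by linarith) hinv
        _ = r := by rw [one_div, Real.rpow_rpow_inv (by linarith) hp]
  refine @TopologicalSpace.isTopologicalBasis_of_isOpen_of_nhds X (distTopology d) _ ?_ ?_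
  · rintro u ⟨x, r, hr, rfl⟩
    exact hball x r
  · intro a u ha hu
    obtain ⟨r, hr, hsub⟩ := hu a ha
    refine ⟨dball d a r, ⟨a, r, hr, rfl⟩, ?_, hsub⟩
    simp only [dball, Set.mem_setOf_eq]
    rw [(hzero a a).mpr rfl]
    exact hr
end

section
/- Let (X,d) be a distance space, p ≠ 0 a real number and σ > 0 with 2σ ≤ 2^(1/p), and suppose d satisfies the power triangle inequality with parameters (p,σ). Then for every sequence (x_n) in X and every x ∈ X, (x_n) converges to x with respect to the induced topology (i.e. for every d-open set U containing x there exists N such that x_n ∈ U for all n ≥ N) if and only if for every ε > 0 there exists N such that d(x_n, x) < ε for all n ≥ N. -/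
/-!
Since `2σ ≤ 2^(1/p)`, the power triangle inequality gives
`d(x,z) ≤ (d(x,y)^p + d(y,z)^p)^(1/p)`. For `p < 0` the right-hand side is at most
`max (d x y) (d y z)`, and for `p > 0` it tends to `d(x,y)` as `d(y,z) → 0`; either way every
ball `B(x,ε)` is `d`-open. So the balls around `x` are neighbourhoods of `x`, and the two notions
of convergence agree.
-/

open Real

section RpowAddRpow

variable {p a b ε : ℝ}

lemma rpow_add_rpow_rpow_one_div_le_max_of_neg (hp : p < 0) (ha : 0 ≤ a) (hb : 0 ≤ b) :
    (a ^ p + b ^ p) ^ (1 / p) ≤ max a b := by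
  rcases ha.eq_or_lt with rfl | ha
  · rw [zero_rpow hp.ne, zero_add, one_div, rpow_rpow_inv hb hp.ne]
    exact le_max_right 0 b
  calc (a ^ p + b ^ p) ^ (1 / p) ≤ (a ^ p) ^ (1 / p) :=
        rpow_le_rpow_of_nonpos (rpow_pos_of_pos ha p)
          (le_add_of_nonneg_right (rpow_nonneg hb p)) (one_div_neg.2 hp).le
    _ = a := by rw [one_div, rpow_rpow_inv ha.le hp.ne]
    _ ≤ max a b := le_max_left a b

lemma exists_pos_forall_rpow_add_rpow_rpow_one_div_lt_of_pos (hp : 0 < p) (ha : 0 ≤ a)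
    (haε : a < ε) : ∃ r > 0, ∀ b, 0 ≤ b → b < r → (a ^ p + b ^ p) ^ (1 / p) < ε := by
  have hε : 0 < ε := ha.trans_lt haε
  have hgap : 0 < ε ^ p - a ^ p := sub_pos.2 (rpow_lt_rpow ha haε hp)
  refine ⟨(ε ^ p - a ^ p) ^ (1 / p), rpow_pos_of_pos hgap _, fun b hb hbr => ?_⟩
  have hbp : b ^ p < ε ^ p - a ^ p := by
    simpa only [one_div, rpow_inv_rpow hgap.le hp.ne'] using rpow_lt_rpow hb hbr hp
  rw [one_div, rpow_inv_lt_iff_of_pos (by positivity) hε.le hp]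
  linarith

lemma exists_pos_forall_rpow_add_rpow_rpow_one_div_lt (hp : p ≠ 0) (ha : 0 ≤ a)
    (haε : a < ε) : ∃ r > 0, ∀ b, 0 ≤ b → b < r → (a ^ p + b ^ p) ^ (1 / p) < ε := by
  rcases hp.lt_or_gt with hp | hp
  · exact ⟨ε, ha.trans_lt haε, fun b hb hbε =>
      (rpow_add_rpow_rpow_one_div_le_max_of_neg hp ha hb).trans_lt (max_lt haε hbε)⟩
  · exact exists_pos_forall_rpow_add_rpow_rpow_one_div_lt_of_pos hp ha haε

end RpowAddRpow

section DistanceSpace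

variable {X : Type*} {d : X → X → ℝ} {p σ : ℝ}

lemma PowerTriangleIneq.le_rpow_add_rpow (hpt : PowerTriangleIneq d p σ)
    (hnn : ∀ x y, 0 ≤ d x y) (hσp : 2 * σ ≤ 2 ^ (1 / p)) (x y z : X) :
    d x z ≤ (d x y ^ p + d y z ^ p) ^ (1 / p) := by
  have hmean : 0 ≤ (1 / 2) * d x y ^ p + (1 / 2) * d y z ^ p := by
    have := rpow_nonneg (hnn x y) p
    have := rpow_nonneg (hnn y z) p
    positivity
  calc d x z ≤ 2 * σ * ((1 / 2) * d x y ^ p + (1 / 2) * d y z ^ p) ^ (1 / p) := hpt x z y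
    _ ≤ 2 ^ (1 / p) * ((1 / 2) * d x y ^ p + (1 / 2) * d y z ^ p) ^ (1 / p) :=
        mul_le_mul_of_nonneg_right hσp (rpow_nonneg hmean _)
    _ = (d x y ^ p + d y z ^ p) ^ (1 / p) := by
        rw [← mul_rpow zero_le_two hmean]
        ring_nf

lemma isDOpen_dball (hd : IsDistance d) (hp : p ≠ 0) (hσp : 2 * σ ≤ 2 ^ (1 / p))
    (hpt : PowerTriangleIneq d p σ) (x : X) (ε : ℝ) : IsDOpen d (dball d x ε) := by
  intro y hy
  obtain ⟨r, hr, hsmall⟩ := exists_pos_forall_rpow_add_rpow_rpow_one_div_lt hp (hd.1 x y) hy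
  exact ⟨r, hr, fun z hz =>
    (hpt.le_rpow_add_rpow hd.1 hσp x y z).trans_lt (hsmall _ (hd.1 y z) hz)⟩

lemma mem_dball_self (hd : IsDistance d) (x : X) {ε : ℝ} (hε : 0 < ε) : x ∈ dball d x ε := by
  show d x x < ε
  rwa [(hd.2.1 x x).2 rfl]

end DistanceSpace

theorem converges_iff_general {X : Type*} (d : X → X → ℝ) (hd : IsDistance d)
    (p σ : ℝ) (hp : p ≠ 0) (hσp : 2 * σ ≤ 2 ^ (1 / p))
    (hpt : PowerTriangleIneq d p σ) (xs : ℕ → X) (x : X) :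
    (∀ U : Set X, IsDOpen d U → x ∈ U → ∃ N : ℕ, ∀ n ≥ N, xs n ∈ U) ↔
      DConvergesTo d xs x := by
  have hsymm := hd.2.2
  constructor
  · intro h ε hε
    obtain ⟨N, hN⟩ := h _ (isDOpen_dball hd hp hσp hpt x ε) (mem_dball_self hd x hε)
    exact ⟨N, fun n hn => hsymm x (xs n) ▸ hN n hn⟩
  · intro h U hU hxU
    obtain ⟨r, hr, hball⟩ := hU x hxU
    obtain ⟨N, hN⟩ := h r hr
    exact ⟨N, fun n hn => hball (show d x (xs n) < r from hsymm (xs n) x ▸ hN n hn)⟩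

/-- If `2σ ≤ 2^(1/p)`, topological convergence in the induced topology coincides
with metric-style convergence. -/
theorem converges_iff {X : Type*} (d : X → X → ℝ) (hd : IsDistance d)
    (p σ : ℝ) (hp : p ≠ 0) (hσ : 0 < σ) (hσp : 2 * σ ≤ 2 ^ (1 / p))
    (hpt : PowerTriangleIneq d p σ) (xs : ℕ → X) (x : X) :
    (∀ U : Set X, IsDOpen d U → x ∈ U → ∃ N : ℕ, ∀ n ≥ N, xs n ∈ U) ↔
      DConvergesTo d xs x :=
  converges_iff_general d hd p σ hp hσp hpt xs x
end

section
/- Let (X,d) be a distance space, p ≠ 0 a real number and σ > 0, and suppose d satisfies the power triangle inequality with parameters (p,σ). Then every convergent sequence in (X,d) is Cauchy: if (x_n) converges to some x ∈ X, then for every ε > 0 there exists N such that d(x_m, x_n) < ε for all m, n ≥ N. -/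
/-- The power mean of two positive numbers is at most any common upper bound. -/
lemma pow_mean_le_max (p a b c : ℝ) (hp : p ≠ 0) (ha : 0 < a) (hb : 0 < b)
    (hac : a ≤ c) (hbc : b ≤ c) :
    ((1 / 2) * a ^ p + (1 / 2) * b ^ p) ^ (1 / p) ≤ c := by
  have hc : 0 < c := lt_of_lt_of_le ha hac
  have hcp : (c ^ p) ^ (1 / p) = c := by
    rw [← Real.rpow_mul hc.le, mul_one_div, div_self hp, Real.rpow_one]
  rcases lt_or_gt_of_ne hp with hneg | hpos
  · -- p < 0 : a^p ≥ c^p, b^p ≥ c^p, and 1/p < 0 reverses again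
    have h1 : c ^ p ≤ a ^ p := Real.rpow_le_rpow_of_nonpos ha hac hneg.le
    have h2 : c ^ p ≤ b ^ p := Real.rpow_le_rpow_of_nonpos hb hbc hneg.le
    have hmean : c ^ p ≤ (1 / 2) * a ^ p + (1 / 2) * b ^ p := by linarith
    have hcpp : 0 < c ^ p := Real.rpow_pos_of_pos hc p
    calc ((1 / 2) * a ^ p + (1 / 2) * b ^ p) ^ (1 / p)
        ≤ (c ^ p) ^ (1 / p) :=
          Real.rpow_le_rpow_of_nonpos hcpp hmean (div_nonpos_of_nonneg_of_nonpos one_pos.le hneg.le)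
      _ = c := hcp
  · have h1 : a ^ p ≤ c ^ p := Real.rpow_le_rpow ha.le hac hpos.le
    have h2 : b ^ p ≤ c ^ p := Real.rpow_le_rpow hb.le hbc hpos.le
    have hmean : (1 / 2) * a ^ p + (1 / 2) * b ^ p ≤ c ^ p := by linarith
    have hmpos : 0 ≤ (1 / 2) * a ^ p + (1 / 2) * b ^ p := by
      have := Real.rpow_pos_of_pos ha p
      have := Real.rpow_pos_of_pos hb p
      linarith
    calc ((1 / 2) * a ^ p + (1 / 2) * b ^ p) ^ (1 / p)
        ≤ (c ^ p) ^ (1 / p) := Real.rpow_le_rpow hmpos hmean (by positivity)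
      _ = c := hcp

/-- In a power distance space, every convergent sequence is Cauchy. -/
theorem convergent_is_cauchy {X : Type*} (d : X → X → ℝ) (hd : IsDistance d)
    (p σ : ℝ) (hp : p ≠ 0) (hσ : 0 < σ) (hpt : PowerTriangleIneq d p σ)
    (xs : ℕ → X) (x : X) (hx : DConvergesTo d xs x) :
    DCauchy d xs := by
  obtain ⟨hnn, hzero, hsymm⟩ := hd
  intro ε hε
  set δ := min ε (ε / (2 * σ)) with hδdef
  have hδ : 0 < δ := lt_min hε (by positivity)
  obtain ⟨N, hN⟩ := hx δ hδ
  refine ⟨N, fun m hm n hn => ?_⟩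
  have ham : d (xs m) x < δ := hN m hm
  have han : d (xs n) x < δ := hN n hn
  rcases eq_or_lt_of_le (hnn (xs m) x) with hm0 | hm0
  · -- xs m = x
    have : xs m = x := (hzero _ _).mp hm0.symm
    rw [this, hsymm x (xs n)]
    exact lt_of_lt_of_le han (min_le_left _ _)
  rcases eq_or_lt_of_le (hnn (xs n) x) with hn0 | hn0
  · have : xs n = x := (hzero _ _).mp hn0.symm
    rw [this]
    exact lt_of_lt_of_le ham (min_le_left _ _)
  -- both positive
  have key := hpt (xs m) (xs n) x
  rw [hsymm x (xs n)] at key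
  have hmax : ((1 / 2) * d (xs m) x ^ p + (1 / 2) * d (xs n) x ^ p) ^ (1 / p)
      ≤ max (d (xs m) x) (d (xs n) x) :=
    pow_mean_le_max p _ _ _ hp hm0 hn0 (le_max_left _ _) (le_max_right _ _)
  have hmaxδ : max (d (xs m) x) (d (xs n) x) < δ := max_lt ham han
  calc d (xs m) (xs n) ≤ 2 * σ * ((1 / 2) * d (xs m) x ^ p + (1 / 2) * d (xs n) x ^ p) ^ (1 / p) := key
    _ ≤ 2 * σ * max (d (xs m) x) (d (xs n) x) := by
        apply mul_le_mul_of_nonneg_left hmax (by positivity)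
    _ < 2 * σ * δ := by apply mul_lt_mul_of_pos_left hmaxδ (by positivity)
    _ ≤ 2 * σ * (ε / (2 * σ)) := by
        apply mul_le_mul_of_nonneg_left (min_le_right _ _) (by positivity)
    _ = ε := by field_simp
end

section
/- Let (X,d) be a distance space, p ≠ 0 a real number and σ > 0, and suppose d satisfies the power triangle inequality with parameters (p,σ). Let (x_n) be a Cauchy sequence in (X,d) and f : ℕ → ℕ strictly increasing (f(n) < f(n+1) for all n). If the subsequence (x_{f(n)}) converges to some L ∈ X, then the whole sequence (x_n) converges to L. -/
private lemma aux_pow_bound (p : ℝ) (hp : p ≠ 0) {a b δ : ℝ} (ha : 0 < a) (hb : 0 < b)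
    (hδ : 0 < δ) (hab : a ≤ δ) (hbb : b ≤ δ) :
    ((1 / 2) * a ^ p + (1 / 2) * b ^ p) ^ (1 / p) ≤ δ := by
  have hδeq : (δ ^ p) ^ (1 / p) = δ := by
    rw [← Real.rpow_mul hδ.le, mul_one_div, div_self hp, Real.rpow_one]
  rcases lt_or_gt_of_ne hp with hneg | hpos
  · have h1 : δ ^ p ≤ a ^ p := Real.rpow_le_rpow_of_nonpos ha hab hneg.le
    have h2 : δ ^ p ≤ b ^ p := Real.rpow_le_rpow_of_nonpos hb hbb hneg.le
    have hsum : δ ^ p ≤ (1 / 2) * a ^ p + (1 / 2) * b ^ p := by linarith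
    have := Real.rpow_le_rpow_of_nonpos (Real.rpow_pos_of_pos hδ p) hsum
      (one_div_nonpos.mpr hneg.le)
    rw [hδeq] at this
    exact this
  · have h1 : a ^ p ≤ δ ^ p := Real.rpow_le_rpow ha.le hab hpos.le
    have h2 : b ^ p ≤ δ ^ p := Real.rpow_le_rpow hb.le hbb hpos.le
    have hsum : (1 / 2) * a ^ p + (1 / 2) * b ^ p ≤ δ ^ p := by linarith
    have hnn : 0 ≤ (1 / 2) * a ^ p + (1 / 2) * b ^ p := by positivity
    have := Real.rpow_le_rpow hnn hsum (by positivity : (0:ℝ) ≤ 1 / p)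
    calc ((1 / 2) * a ^ p + (1 / 2) * b ^ p) ^ (1 / p) ≤ (δ ^ p) ^ (1 / p) := this
      _ = δ := hδeq

/-- In a power distance space, a Cauchy sequence with a convergent subsequence
converges to the same limit. -/
theorem cauchy_with_convergent_subseq {X : Type*} (d : X → X → ℝ) (hd : IsDistance d)
    (p σ : ℝ) (hp : p ≠ 0) (hσ : 0 < σ) (hpt : PowerTriangleIneq d p σ)
    (xs : ℕ → X) (f : ℕ → ℕ) (hf : ∀ n, f n < f (n + 1))
    (hc : DCauchy d xs) (L : X) (hsub : DConvergesTo d (fun n => xs (f n)) L) :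
    DConvergesTo d xs L := by
  obtain ⟨hnn, heq, hsymm⟩ := hd
  intro ε hε
  set δ : ℝ := min ε (ε / (2 * σ)) / 2 with hδdef
  have hδpos : 0 < δ := by
    have : 0 < ε / (2 * σ) := by positivity
    positivity
  have hδε : δ < ε := by
    have h1 : min ε (ε / (2 * σ)) ≤ ε := min_le_left _ _
    simp only [hδdef]; linarith
  have hδσ : 2 * σ * δ < ε := by
    have h1 : min ε (ε / (2 * σ)) ≤ ε / (2 * σ) := min_le_right _ _
    have h2 : 2 * σ * (ε / (2 * σ)) = ε := by field_simp
    have h3 : 2 * σ * δ ≤ 2 * σ * (ε / (2 * σ)) / 2 := by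
      rw [hδdef]
      rw [mul_div_assoc]
      gcongr
    nlinarith [hσ, hε]
  obtain ⟨N1, hN1⟩ := hc δ hδpos
  obtain ⟨N2, hN2⟩ := hsub δ hδpos
  have hfmono : ∀ n, n ≤ f n := by
    intro n
    induction n with
    | zero => exact Nat.zero_le _
    | succ k ih => exact Nat.lt_of_le_of_lt ih (hf k)
  set m : ℕ := max N1 N2 with hm
  have hfm1 : f m ≥ N1 := le_trans (le_trans (le_max_left _ _) (hfmono m)) le_rfl
  have hmN2 : m ≥ N2 := le_max_right _ _
  refine ⟨N1, fun n hn => ?_⟩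
  have hcau : d (xs n) (xs (f m)) < δ := hN1 n hn (f m) hfm1
  have hconv : d (xs (f m)) L < δ := hN2 m hmN2
  by_cases h1 : xs n = xs (f m)
  · rw [h1]; exact lt_trans hconv hδε
  by_cases h2 : xs (f m) = L
  · rw [← h2, hsymm]
    rw [hsymm] at hcau
    exact lt_trans hcau hδε
  · have ha : 0 < d (xs n) (xs (f m)) :=
      lt_of_le_of_ne (hnn _ _) (fun h => h1 ((heq _ _).mp h.symm))
    have hb : 0 < d (xs (f m)) L :=
      lt_of_le_of_ne (hnn _ _) (fun h => h2 ((heq _ _).mp h.symm))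
    have key := hpt (xs n) L (xs (f m))
    have hbound := aux_pow_bound p hp ha hb hδpos hcau.le hconv.le
    calc d (xs n) L ≤ 2 * σ * ((1 / 2) * d (xs n) (xs (f m)) ^ p +
          (1 / 2) * d (xs (f m)) L ^ p) ^ (1 / p) := key
      _ ≤ 2 * σ * δ := by gcongr
      _ < ε := hδσ
end

section
/- Let (X,d) be a distance space, p ≥ 1 a real number and σ > 0 with 2σ = 2^(1/p), and suppose d satisfies the power triangle inequality with parameters (p,σ). Then d is sequentially continuous: if (x_n) converges to x and (y_n) converges to y in (X,d), then the real sequence d(x_n, y_n) converges to d(x, y). -/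
/-- If `2σ = 2^(1/p)` with `p ≥ 1`, the power distance function is sequentially
continuous. -/
theorem distance_sequentially_continuous {X : Type*} (d : X → X → ℝ) (hd : IsDistance d)
    (p σ : ℝ) (hp : 1 ≤ p) (hσ : 0 < σ) (hσp : 2 * σ = 2 ^ (1 / p))
    (hpt : PowerTriangleIneq d p σ)
    (xs ys : ℕ → X) (x y : X)
    (hx : DConvergesTo d xs x) (hy : DConvergesTo d ys y) :
    Filter.Tendsto (fun n => d (xs n) (ys n)) Filter.atTop (nhds (d x y)) := by

  obtain ⟨hnn, _heq, hsymm⟩ := hd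
  have hp0 : (0:ℝ) < p := lt_of_lt_of_le one_pos hp
  -- ordinary triangle inequality
  have tri : ∀ a b c : X, d a b ≤ d a c + d c b := by
    intro a b c
    have h1 := hpt a b c
    have ha := hnn a c
    have hb := hnn c b
    have hsum : (1/2) * d a c ^ p + (1/2) * d c b ^ p
        = (1/2) * (d a c ^ p + d c b ^ p) := by ring
    have hpnn : 0 ≤ d a c ^ p + d c b ^ p :=
      add_nonneg (Real.rpow_nonneg ha p) (Real.rpow_nonneg hb p)
    have h2 : 2 * σ * ((1/2) * d a c ^ p + (1/2) * d c b ^ p) ^ (1/p)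
        = (d a c ^ p + d c b ^ p) ^ (1/p) := by
      rw [hσp, hsum, ← Real.mul_rpow (by norm_num) (by positivity)]
      congr 1
      ring
    have h34 : (d a c ^ p + d c b ^ p) ^ (1/p) ≤ d a c + d c b := by
      have h := NNReal.rpow_add_rpow_le_add (⟨d a c, ha⟩ : NNReal) ⟨d c b, hb⟩ hp
      have h' := NNReal.coe_le_coe.2 h
      push_cast [NNReal.coe_rpow] at h'
      exact h'
    calc d a b ≤ 2 * σ * ((1/2) * d a c ^ p + (1/2) * d c b ^ p) ^ (1/p) := h1
      _ = (d a c ^ p + d c b ^ p) ^ (1/p) := h2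
      _ ≤ d a c + d c b := h34
  rw [Metric.tendsto_atTop]
  intro ε hε
  obtain ⟨N1, hN1⟩ := hx (ε/2) (by linarith)
  obtain ⟨N2, hN2⟩ := hy (ε/2) (by linarith)
  refine ⟨max N1 N2, fun n hn => ?_⟩
  have h1 := hN1 n (le_trans (le_max_left _ _) hn)
  have h2 := hN2 n (le_trans (le_max_right _ _) hn)
  have u1 : d (xs n) (ys n) ≤ d (xs n) x + d x y + d y (ys n) := by
    calc d (xs n) (ys n) ≤ d (xs n) y + d y (ys n) := tri _ _ _
      _ ≤ (d (xs n) x + d x y) + d y (ys n) := by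
          have := tri (xs n) y x; linarith
  have u2 : d x y ≤ d x (xs n) + d (xs n) (ys n) + d (ys n) y := by
    calc d x y ≤ d x (ys n) + d (ys n) y := tri _ _ _
      _ ≤ (d x (xs n) + d (xs n) (ys n)) + d (ys n) y := by
          have := tri x (ys n) (xs n); linarith
  have s1 : d x (xs n) = d (xs n) x := hsymm _ _
  have s2 : d y (ys n) = d (ys n) y := hsymm _ _
  rw [Real.dist_eq, abs_lt]
  constructor <;> [skip; skip] <;> nlinarith [hnn (xs n) x, hnn (ys n) y]
end

section
/- (Uniqueness of limits) Let (X,d) be a distance space, p ≠ 0 a real number and σ > 0, and suppose d satisfies the power triangle inequality with parameters (p,σ). If a sequence (x_n) converges to x and also converges to y, then x = y. -/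
/-- In a power distance space, limits of convergent sequences are unique. -/
theorem limit_unique {X : Type*} (d : X → X → ℝ) (hd : IsDistance d)
    (p σ : ℝ) (hp : p ≠ 0) (hσ : 0 < σ) (hpt : PowerTriangleIneq d p σ)
    (xs : ℕ → X) (x y : X)
    (hx : DConvergesTo d xs x) (hy : DConvergesTo d xs y) :
    x = y := by
  obtain ⟨hpos, hzero, hsymm⟩ := hd
  by_contra hne
  have hD : 0 < d x y :=
    lt_of_le_of_ne (hpos x y) (fun h => hne ((hzero x y).mp h.symm))
  set D := d x y with hDdef
  have hε : 0 < min (D / 2) (D / (4 * σ)) :=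
    lt_min (by positivity) (by positivity)
  set ε := min (D / 2) (D / (4 * σ)) with hεdef
  obtain ⟨N1, hN1⟩ := hx ε hε
  obtain ⟨N2, hN2⟩ := hy ε hε
  set n := max N1 N2 with hn
  have ha : d (xs n) x < ε := hN1 n (le_max_left _ _)
  have hb : d (xs n) y < ε := hN2 n (le_max_right _ _)
  have hεD2 : ε ≤ D / 2 := min_le_left _ _
  by_cases ha0 : d (xs n) x = 0
  · have hxy : xs n = x := (hzero _ _).mp ha0
    have : D < ε := by rw [hDdef, ← hxy]; exact hb
    linarith
  by_cases hb0 : d (xs n) y = 0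
  · have hxy : xs n = y := (hzero _ _).mp hb0
    have : D < ε := by
      rw [hDdef, hsymm x y, ← hxy]; exact ha
    linarith
  have ha' : 0 < d (xs n) x := lt_of_le_of_ne (hpos _ _) (Ne.symm ha0)
  have hb' : 0 < d (xs n) y := lt_of_le_of_ne (hpos _ _) (Ne.symm hb0)
  have key := hpt x y (xs n)
  rw [hsymm x (xs n)] at key
  have hεp : (ε ^ p) ^ (1 / p) = ε := by
    rw [← Real.rpow_mul hε.le, mul_one_div_cancel hp, Real.rpow_one]
  have hsum : ((1 / 2) * d (xs n) x ^ p + (1 / 2) * d (xs n) y ^ p) ^ (1 / p) ≤ ε := by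
    rcases lt_or_gt_of_ne hp with hpneg | hppos
    · have h1 : ε ^ p ≤ d (xs n) x ^ p :=
        Real.rpow_le_rpow_of_nonpos ha' ha.le hpneg.le
      have h2 : ε ^ p ≤ d (xs n) y ^ p :=
        Real.rpow_le_rpow_of_nonpos hb' hb.le hpneg.le
      have hεppos : 0 < ε ^ p := Real.rpow_pos_of_pos hε p
      calc ((1 / 2) * d (xs n) x ^ p + (1 / 2) * d (xs n) y ^ p) ^ (1 / p)
          ≤ (ε ^ p) ^ (1 / p) := by
            apply Real.rpow_le_rpow_of_nonpos hεppos (by linarith)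
            exact div_nonpos_of_nonneg_of_nonpos zero_le_one hpneg.le
        _ = ε := hεp
    · have h1 : d (xs n) x ^ p ≤ ε ^ p :=
        Real.rpow_le_rpow (hpos _ _) ha.le hppos.le
      have h2 : d (xs n) y ^ p ≤ ε ^ p :=
        Real.rpow_le_rpow (hpos _ _) hb.le hppos.le
      have hap : 0 ≤ d (xs n) x ^ p := Real.rpow_nonneg (hpos _ _) p
      have hbp : 0 ≤ d (xs n) y ^ p := Real.rpow_nonneg (hpos _ _) p
      calc ((1 / 2) * d (xs n) x ^ p + (1 / 2) * d (xs n) y ^ p) ^ (1 / p)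
          ≤ (ε ^ p) ^ (1 / p) := by
            apply Real.rpow_le_rpow (by linarith) (by linarith)
            positivity
        _ = ε := hεp
  have h2σ : (0:ℝ) ≤ 2 * σ := by linarith
  have hεσ : ε ≤ D / (4 * σ) := min_le_right _ _
  have : D ≤ 2 * σ * ε := le_trans key (mul_le_mul_of_nonneg_left hsum h2σ)
  have h4σ : (0:ℝ) < 4 * σ := by linarith
  have : 2 * σ * ε ≤ 2 * σ * (D / (4 * σ)) :=
    mul_le_mul_of_nonneg_left hεσ h2σ
  have hcalc : 2 * σ * (D / (4 * σ)) = D / 2 := by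
    field_simp; ring
  linarith
end

section
/- (Limiting values of the power mean) Let N ≥ 1, let x : Fin N → ℝ with x_i > 0 for all i, and let λ : Fin N → ℝ with λ_i > 0 for all i and ∑ λ_i = 1. Define M_p(x) = (∑_i λ_i · x_i^p)^(1/p) for real p ≠ 0. Then: (a) M_p(x) tends to max_i x_i as p → +∞; (b) M_p(x) tends to min_i x_i as p → −∞; (c) M_p(x) tends to the weighted geometric mean ∏_i x_i^(λ_i) as p → 0 (limit along nonzero p). -/
/-!
For `p > 0` the power mean is squeezed between `w j ^ (1/p) * x j` and `x j`, where `x j` is the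
largest entry, and `w j ^ (1/p) → 1`. The case `p → -∞` follows from
`M_{-p}(x) = M_p(x⁻¹)⁻¹`. Near `p = 0`, `log M_p(x) = log S(p) / p` with
`S(p) = ∑ i, w i * x i ^ p` and `S(0) = 1`, so it is a difference quotient of `log ∘ S` at `0`
and tends to `S'(0) = ∑ i, w i * log (x i)`.
-/

open Finset Filter Real Topology

noncomputable def powerMean {ι : Type*} [Fintype ι] (w x : ι → ℝ) (p : ℝ) : ℝ :=
  (∑ i, w i * x i ^ p) ^ (1 / p)

section

variable {ι : Type*} [Fintype ι] {w x : ι → ℝ}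

lemma nonempty_of_sum_eq_one (hsum : ∑ i, w i = 1) : Nonempty ι :=
  univ_nonempty_iff.mp (nonempty_of_sum_ne_zero (by rw [hsum]; exact one_ne_zero))

lemma powerMean_le_of_forall_le (hw : ∀ i, 0 ≤ w i) (hsum : ∑ i, w i = 1)
    (hx : ∀ i, 0 ≤ x i) {c p : ℝ} (hc : 0 ≤ c) (hp : 0 < p) (hxc : ∀ i, x i ≤ c) :
    powerMean w x p ≤ c := by
  have hS : ∑ i, w i * x i ^ p ≤ c ^ p :=
    calc ∑ i, w i * x i ^ p ≤ ∑ i, w i * c ^ p := by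
          gcongr with i
          · exact hw i
          · exact hx i
          · exact hxc i
      _ = c ^ p := by rw [← sum_mul, hsum, one_mul]
  calc powerMean w x p ≤ (c ^ p) ^ (1 / p) :=
        rpow_le_rpow (sum_nonneg fun i _ => mul_nonneg (hw i) (rpow_nonneg (hx i) p)) hS
          (by positivity)
    _ = c := by rw [one_div, rpow_rpow_inv hc hp.ne']

lemma rpow_one_div_mul_le_powerMean (hw : ∀ i, 0 ≤ w i) (hx : ∀ i, 0 ≤ x i) (j : ι) {p : ℝ}
    (hp : 0 < p) : w j ^ (1 / p) * x j ≤ powerMean w x p := by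
  have hterm : ∀ i, 0 ≤ w i * x i ^ p := fun i => mul_nonneg (hw i) (rpow_nonneg (hx i) p)
  calc w j ^ (1 / p) * x j = (w j * x j ^ p) ^ (1 / p) := by
        rw [mul_rpow (hw j) (rpow_nonneg (hx j) p), one_div, rpow_rpow_inv (hx j) hp.ne']
    _ ≤ powerMean w x p :=
        rpow_le_rpow (hterm j) (single_le_sum (fun i _ => hterm i) (mem_univ j)) (by positivity)

lemma tendsto_powerMean_atTop_of_forall_le (hw : ∀ i, 0 ≤ w i) (hsum : ∑ i, w i = 1)
    (hx : ∀ i, 0 ≤ x i) {j : ι} (hwj : 0 < w j) (hj : ∀ i, x i ≤ x j) :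
    Tendsto (powerMean w x) atTop (𝓝 (x j)) := by
  have hlower : Tendsto (fun p : ℝ => w j ^ (1 / p) * x j) atTop (𝓝 (x j)) := by
    have h := ((tendsto_const_nhds (x := w j)).rpow
      ((tendsto_const_nhds (x := (1 : ℝ))).div_atTop tendsto_id) (Or.inl hwj.ne')).mul_const (x j)
    simpa using h
  refine tendsto_of_tendsto_of_tendsto_of_le_of_le' hlower tendsto_const_nhds ?_ ?_
  · filter_upwards [eventually_gt_atTop 0] with p hp
    exact rpow_one_div_mul_le_powerMean hw hx j hp
  · filter_upwards [eventually_gt_atTop 0] with p hp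
    exact powerMean_le_of_forall_le hw hsum hx (hx j) hp hj

lemma powerMean_neg (hw : ∀ i, 0 ≤ w i) (hx : ∀ i, 0 ≤ x i) (p : ℝ) :
    powerMean w x (-p) = (powerMean w x⁻¹ p)⁻¹ := by
  have hS : ∑ i, w i * x⁻¹ i ^ p = ∑ i, w i * x i ^ (-p) := by
    simp only [Pi.inv_apply, inv_rpow (hx _), rpow_neg (hx _)]
  rw [powerMean, powerMean, hS, one_div_neg_eq_neg_one_div,
    rpow_neg (sum_nonneg fun i _ => mul_nonneg (hw i) (rpow_nonneg (hx i) _))]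

lemma tendsto_powerMean_atBot_of_forall_le (hw : ∀ i, 0 ≤ w i) (hsum : ∑ i, w i = 1)
    (hx : ∀ i, 0 < x i) {j : ι} (hwj : 0 < w j) (hj : ∀ i, x j ≤ x i) :
    Tendsto (powerMean w x) atBot (𝓝 (x j)) := by
  have hinv := (tendsto_powerMean_atTop_of_forall_le (x := x⁻¹) hw hsum (fun i => (inv_pos.2 (hx i)).le)
    hwj fun i => inv_anti₀ (hx j) (hj i)).inv₀ (inv_ne_zero (hx j).ne')
  simp only [Pi.inv_apply, inv_inv] at hinv
  refine (hinv.comp tendsto_neg_atBot_atTop).congr fun p => ?_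
  rw [Function.comp_apply, powerMean_neg (x := x⁻¹) hw fun i => (inv_pos.2 (hx i)).le, inv_inv, inv_inv]

lemma tendsto_powerMean_atTop (hw : ∀ i, 0 < w i) (hsum : ∑ i, w i = 1) (hx : ∀ i, 0 ≤ x i) :
    Tendsto (powerMean w x) atTop (𝓝 (⨆ i, x i)) := by
  have := nonempty_of_sum_eq_one hsum
  obtain ⟨j, hj⟩ := exists_eq_ciSup_of_finite (f := x)
  rw [← hj]
  exact tendsto_powerMean_atTop_of_forall_le (fun i => (hw i).le) hsum hx (hw j)
    fun i => hj ▸ le_ciSup (Finite.bddAbove_range x) i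

lemma tendsto_powerMean_atBot (hw : ∀ i, 0 < w i) (hsum : ∑ i, w i = 1) (hx : ∀ i, 0 < x i) :
    Tendsto (powerMean w x) atBot (𝓝 (⨅ i, x i)) := by
  have := nonempty_of_sum_eq_one hsum
  obtain ⟨j, hj⟩ := exists_eq_ciInf_of_finite (f := x)
  rw [← hj]
  exact tendsto_powerMean_atBot_of_forall_le (fun i => (hw i).le) hsum hx (hw j)
    fun i => hj ▸ ciInf_le (Finite.bddBelow_range x) i

lemma hasDerivAt_sum_mul_rpow (hx : ∀ i, 0 < x i) (p : ℝ) :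
    HasDerivAt (fun q => ∑ i, w i * x i ^ q) (∑ i, w i * (x i ^ p * log (x i))) p :=
  HasDerivAt.fun_sum fun i _ => (hasStrictDerivAt_const_rpow (hx i) p).hasDerivAt.const_mul (w i)

lemma powerMean_eq_exp_log_div {p : ℝ} (hS : 0 < ∑ i, w i * x i ^ p) :
    powerMean w x p = exp (log (∑ i, w i * x i ^ p) / p) := by
  rw [powerMean, rpow_def_of_pos hS, mul_one_div]

lemma exp_sum_mul_log (hx : ∀ i, 0 < x i) : exp (∑ i, w i * log (x i)) = ∏ i, x i ^ w i := by
  rw [exp_sum]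
  exact prod_congr rfl fun i _ => by rw [rpow_def_of_pos (hx i), mul_comm]

lemma tendsto_powerMean_nhdsNE_zero (hsum : ∑ i, w i = 1) (hx : ∀ i, 0 < x i) :
    Tendsto (powerMean w x) (𝓝[≠] 0) (𝓝 (∏ i, x i ^ w i)) := by
  set S : ℝ → ℝ := fun p => ∑ i, w i * x i ^ p
  have hS0 : S 0 = 1 := by simp [S, hsum]
  have hS : HasDerivAt S (∑ i, w i * log (x i)) 0 := by
    simpa using hasDerivAt_sum_mul_rpow (w := w) hx 0
  have hlogS : Tendsto (fun p => log (S p) / p) (𝓝[≠] 0) (𝓝 (∑ i, w i * log (x i))) := by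
    have h := hasDerivAt_iff_tendsto_slope.1 (hS.log (by simp [hS0]))
    rw [hS0, div_one] at h
    refine h.congr fun p => ?_
    simp [slope_def_field, hS0]
  have hpos : ∀ᶠ p in 𝓝[≠] 0, 0 < S p :=
    nhdsWithin_le_nhds (hS.continuousAt.eventually (lt_mem_nhds (by simp [hS0])))
  rw [← exp_sum_mul_log hx]
  refine ((continuous_exp.tendsto _).comp hlogS).congr' ?_
  filter_upwards [hpos] with p hp
  exact (powerMean_eq_exp_log_div hp).symm

end

theorem powerMean_limits_general (N : ℕ) (x w : Fin N → ℝ)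
    (hx : ∀ i, 0 < x i) (hw : ∀ i, 0 < w i) (hsum : ∑ i, w i = 1) :
    Tendsto (fun p : ℝ => (∑ i, w i * x i ^ p) ^ (1 / p)) atTop
      (nhds (⨆ i, x i)) ∧
    Tendsto (fun p : ℝ => (∑ i, w i * x i ^ p) ^ (1 / p)) atBot
      (nhds (⨅ i, x i)) ∧
    Tendsto (fun p : ℝ => (∑ i, w i * x i ^ p) ^ (1 / p)) (nhdsWithin 0 {0}ᶜ)
      (nhds (∏ i, x i ^ w i)) :=
  ⟨tendsto_powerMean_atTop hw hsum fun i => (hx i).le, tendsto_powerMean_atBot hw hsum hx,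
    tendsto_powerMean_nhdsNE_zero hsum hx⟩

/-- Limiting values of the weighted power mean `(∑ i, w i * x i ^ p) ^ (1/p)`:
as `p → +∞` it tends to the maximum, as `p → −∞` to the minimum, and as `p → 0`
(along nonzero `p`) to the weighted geometric mean.  `^` is real (rpow)
exponentiation. -/
theorem powerMean_limits (N : ℕ) (hN : 1 ≤ N) (x w : Fin N → ℝ)
    (hx : ∀ i, 0 < x i) (hw : ∀ i, 0 < w i) (hsum : ∑ i, w i = 1) :
    Tendsto (fun p : ℝ => (∑ i, w i * x i ^ p) ^ (1 / p)) atTop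
      (nhds (⨆ i, x i)) ∧
    Tendsto (fun p : ℝ => (∑ i, w i * x i ^ p) ^ (1 / p)) atBot
      (nhds (⨅ i, x i)) ∧
    Tendsto (fun p : ℝ => (∑ i, w i * x i ^ p) ^ (1 / p)) (nhdsWithin 0 {0}ᶜ)
      (nhds (∏ i, x i ^ w i)) :=
  powerMean_limits_general N x w hx hw hsum
end

section
/- Define d : ℝ → ℝ → ℝ by d(x,y) = (x − y)^2. Then for every real p ≥ 1, every σ ≥ 2, and all x, y, z ∈ ℝ, the power triangle inequality holds: (x − y)^2 ≤ 2σ·((1/2)·((x − z)^2)^p + (1/2)·((z − y)^2)^p)^(1/p). -/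
open Real

lemma avg_le_rpow_mean {a b p : ℝ} (ha : 0 ≤ a) (hb : 0 ≤ b) (hp : 1 ≤ p) :
    (1 / 2) * a + (1 / 2) * b ≤ ((1 / 2) * a ^ p + (1 / 2) * b ^ p) ^ (1 / p) := by
  have := Real.arith_mean_le_rpow_mean (Finset.univ : Finset (Fin 2))
    ![1/2, 1/2] ![a, b] (by intro i _; fin_cases i <;> norm_num)
    (by simp [Fin.sum_univ_two]; norm_num)
    (by intro i _; fin_cases i <;> assumption) hp
  simpa [Fin.sum_univ_two] using this

/-- The squared-difference distance `d(x,y) = (x − y)²` on `ℝ` satisfies the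
power triangle inequality with parameters `(p, σ)` for every `p ≥ 1` and
`σ ≥ 2`.  `^ p` and `^ (1/p)` denote real (rpow) exponentiation. -/
theorem sq_dist_power_triangle (p σ : ℝ) (hp : 1 ≤ p) (hσ : 2 ≤ σ) (x y z : ℝ) :
    (x - y) ^ 2 ≤
      2 * σ * ((1 / 2) * ((x - z) ^ 2) ^ p + (1 / 2) * ((z - y) ^ 2) ^ p) ^ (1 / p) := by
  set a := (x - z) ^ 2 with ha
  set b := (z - y) ^ 2 with hb
  have ha0 : 0 ≤ a := sq_nonneg _
  have hb0 : 0 ≤ b := sq_nonneg _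
  have h1 : (x - y) ^ 2 ≤ 2 * a + 2 * b := by
    have : x - y = (x - z) + (z - y) := by ring
    rw [this, ha, hb]; nlinarith [sq_nonneg ((x - z) - (z - y))]
  have h2 : (1 / 2) * a + (1 / 2) * b ≤ ((1 / 2) * a ^ p + (1 / 2) * b ^ p) ^ (1 / p) :=
    avg_le_rpow_mean ha0 hb0 hp
  nlinarith [h1, h2, mul_le_mul_of_nonneg_left h2 (by linarith : (0:ℝ) ≤ 2 * σ)]
end

section
/- Define d : ℝ → ℝ → ℝ by d(x,y) = |x − y| if x = 0 or y = 0 or x = y, and d(x,y) = 1 otherwise. Then d is a distance on ℝ, but it satisfies no power triangle inequality: for every real p ≠ 0 and every σ > 0 there exist x, y, z ∈ ℝ such that d(x,y) > 2σ·((1/2)·d(x,z)^p + (1/2)·d(z,y)^p)^(1/p). -/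
/-- The distance on `ℝ` which is Euclidean when `x = 0`, `y = 0` or `x = y`,
and discrete (equal to `1`) otherwise. -/
noncomputable def dEx (x y : ℝ) : ℝ :=
  if x = 0 ∨ y = 0 ∨ x = y then |x - y| else 1

/-- `dEx` is a distance on `ℝ`, but it satisfies no power triangle inequality:
for every `p ≠ 0` and `σ > 0` the power triangle inequality with parameters
`(p, σ)` fails at some triple of points.  `^` is real (rpow) exponentiation. -/
theorem dEx_no_power_triangle :
    IsDistance dEx ∧
    ∀ p : ℝ, p ≠ 0 → ∀ σ : ℝ, 0 < σ →
      ∃ x y z : ℝ,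
        dEx x y > 2 * σ * ((1 / 2) * dEx x z ^ p + (1 / 2) * dEx z y ^ p) ^ (1 / p) := by
  refine ⟨⟨?_, ?_, ?_⟩, ?_⟩
  · intro x y
    unfold dEx
    split <;> positivity
  · intro x y
    unfold dEx
    split
    next h => simp [abs_eq_zero, sub_eq_zero]
    next h =>
      push_neg at h
      simp [h.2.2]
  · intro x y
    unfold dEx
    by_cases h : x = 0 ∨ y = 0 ∨ x = y
    · have h' : y = 0 ∨ x = 0 ∨ y = x := by tauto
      rw [if_pos h, if_pos h', abs_sub_comm]
    · have h' : ¬ (y = 0 ∨ x = 0 ∨ y = x) := by tauto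
      rw [if_neg h, if_neg h']
  · intro p hp σ hσ
    set ε : ℝ := 1 / (4 * σ) with hε
    have hεpos : 0 < ε := by positivity
    refine ⟨ε, -ε, 0, ?_⟩
    have h1 : dEx ε (-ε) = 1 := by
      unfold dEx
      rw [if_neg]
      push_neg
      refine ⟨hεpos.ne', by simpa using hεpos.ne', ?_⟩
      intro h
      nlinarith
    have h2 : dEx ε 0 = ε := by
      unfold dEx
      rw [if_pos (by tauto)]
      simp [abs_of_pos hεpos]
    have h3 : dEx 0 (-ε) = ε := by
      unfold dEx
      rw [if_pos (by tauto)]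
      simp [abs_of_pos hεpos]
    rw [h1, h2, h3]
    have hsum : (1 / 2) * ε ^ p + (1 / 2) * ε ^ p = ε ^ p := by ring
    rw [hsum, ← Real.rpow_mul hεpos.le, mul_one_div_cancel hp, Real.rpow_one]
    have : 2 * σ * ε = 1 / 2 := by
      rw [hε]; field_simp; ring
    rw [this]; norm_num
end
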